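/- arXiv:2601.09021 — 2 statements merged into one kernel-verified Lean document; each statement's English description precedes it below -/
import Mathlib

section
/- Let Φ be an irreducible reduced root system with positive roots α ⪯ γ (in the usual dominance order) satisfying ht(γ) − ht(α) ≥ 2. Then there exists a positive root β with α ≺ β ≺ γ. -/
open Finset

/-- A (concrete) reduced root system in a real inner product space, with a fixed base `Δ`
of simple roots and the integer coefficient function of roots with respect to the base. -/
structure RootSystemData (V : Type*) [NormedAddCommGroup V] [InnerProductSpace ℝ V] where
  /-- the finite set of roots -/
  Φ : Finset V
  /-- the base of simple roots -/
  Δ : Finset V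
  nonempty : Φ.Nonempty
  Δ_subset : Δ ⊆ Φ
  zero_not_mem : (0 : V) ∉ Φ
  /-- `coeff α δ` is the coefficient of the simple root `δ` in `α` -/
  coeff : V → V → ℤ
  root_eq_sum : ∀ α ∈ Φ, α = ∑ δ ∈ Δ, (coeff α δ : ℝ) • δ
  coeff_sign : ∀ α ∈ Φ, (∀ δ ∈ Δ, 0 ≤ coeff α δ) ∨ (∀ δ ∈ Δ, coeff α δ ≤ 0)
  coeff_self : ∀ δ ∈ Δ, coeff δ δ = 1
  coeff_ne : ∀ δ ∈ Δ, ∀ δ' ∈ Δ, δ ≠ δ' → coeff δ δ' = 0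
  linIndep : LinearIndependent ℝ (fun δ : ↥Δ => (δ : V))
  neg_mem : ∀ α ∈ Φ, -α ∈ Φ
  reduced : ∀ α ∈ Φ, ∀ t : ℝ, t • α ∈ Φ → t = 1 ∨ t = -1
  /-- the integer Cartan pairing `⟨α, β^∨⟩` -/
  cartan : V → V → ℤ
  cartan_eq : ∀ α ∈ Φ, ∀ β ∈ Φ, (cartan α β : ℝ) * (inner ℝ β β : ℝ) = 2 * (inner ℝ α β : ℝ)
  reflect_mem : ∀ α ∈ Φ, ∀ β ∈ Φ, α - (cartan α β : ℝ) • β ∈ Φ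
  irreducible : ∀ S ⊆ Φ, (∀ α ∈ S, ∀ β ∈ Φ, β ∉ S → (inner ℝ α β : ℝ) = 0) → S = ∅ ∨ S = Φ

namespace RootSystemData

variable {V : Type*} [NormedAddCommGroup V] [InnerProductSpace ℝ V] (R : RootSystemData V)

/-- The height of a root: the sum of its coefficients over the base. -/
def ht (α : V) : ℤ := ∑ δ ∈ R.Δ, R.coeff α δ

/-- `α` is a positive root. -/
def IsPos (α : V) : Prop := α ∈ R.Φ ∧ ∀ δ ∈ R.Δ, 0 ≤ R.coeff α δ

/-- The set of positive roots. -/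
def posRoots : Finset V := R.Φ.filter (fun α => ∀ δ ∈ R.Δ, 0 ≤ R.coeff α δ)

/-- The set of negative roots. -/
def negRoots : Finset V := R.Φ.filter (fun α => ∀ δ ∈ R.Δ, R.coeff α δ ≤ 0)

/-- The Coxeter number `h = 1 + max height`. -/
def coxeter : ℤ := 1 + R.Φ.sup' R.nonempty R.ht

/-- The dominance order: `γ - α` is a nonnegative combination of simple roots. -/
def le (α γ : V) : Prop := ∀ δ ∈ R.Δ, R.coeff α δ ≤ R.coeff γ δ

/-- Strict dominance order. -/
def lt (α γ : V) : Prop := R.le α γ ∧ α ≠ γ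

/-- `Φ_k`: the roots of height congruent to `k` modulo the Coxeter number. -/
def phiMod (k : ℤ) : Finset V := R.Φ.filter (fun γ => R.ht γ % R.coxeter = k % R.coxeter)

end RootSystemData

/-! Write `γ - α = ∑ cδ • δ` with all `cδ ≥ 0`. Since
`0 < ‖γ - α‖² = ∑ cδ (⟪δ, γ⟫ - ⟪δ, α⟫)`, some simple root `δ` occurring in `γ - α` has
either `⟪δ, γ⟫ > 0`, so that `γ - δ` is a root, or `⟪δ, α⟫ < 0`, so that `α + δ` is a root.
That root lies between `α` and `γ`, and the height gap `≥ 2` keeps it away from both ends. -/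

namespace RootSystemData

variable {V : Type*} [NormedAddCommGroup V] [InnerProductSpace ℝ V] (R : RootSystemData V)

lemma coeff_eq_of_eq_sum {α : V} (hα : α ∈ R.Φ) (c : V → ℤ)
    (h : α = ∑ δ ∈ R.Δ, (c δ : ℝ) • δ) {δ : V} (hδ : δ ∈ R.Δ) : R.coeff α δ = c δ := by
  have hsum : ∑ d : R.Δ, (R.coeff α d : ℝ) • (d : V) = ∑ d : R.Δ, (c d : ℝ) • (d : V) := by
    rw [sum_coe_sort R.Δ (fun d => (R.coeff α d : ℝ) • d),
      sum_coe_sort R.Δ (fun d => (c d : ℝ) • d), ← R.root_eq_sum α hα, ← h]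
  exact_mod_cast R.linIndep.eq_coords_of_eq hsum ⟨δ, hδ⟩

lemma coeff_sub {α β : V} (hα : α ∈ R.Φ) (hβ : β ∈ R.Φ) (hαβ : α - β ∈ R.Φ) {δ : V}
    (hδ : δ ∈ R.Δ) : R.coeff (α - β) δ = R.coeff α δ - R.coeff β δ := by
  refine R.coeff_eq_of_eq_sum hαβ (fun d => R.coeff α d - R.coeff β d) ?_ hδ
  conv_lhs => rw [R.root_eq_sum α hα, R.root_eq_sum β hβ]
  simp only [Int.cast_sub, sub_smul, sum_sub_distrib]

lemma coeff_add {α β : V} (hα : α ∈ R.Φ) (hβ : β ∈ R.Φ) (hαβ : α + β ∈ R.Φ) {δ : V}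
    (hδ : δ ∈ R.Δ) : R.coeff (α + β) δ = R.coeff α δ + R.coeff β δ := by
  have := R.coeff_sub hαβ hβ (by rwa [add_sub_cancel_right]) hδ
  rw [add_sub_cancel_right] at this
  omega

lemma ht_sub {α β : V} (hα : α ∈ R.Φ) (hβ : β ∈ R.Φ) (hαβ : α - β ∈ R.Φ) :
    R.ht (α - β) = R.ht α - R.ht β := by
  rw [ht, sum_congr rfl fun δ hδ => R.coeff_sub hα hβ hαβ hδ, sum_sub_distrib, ht, ht]

lemma ht_add {α β : V} (hα : α ∈ R.Φ) (hβ : β ∈ R.Φ) (hαβ : α + β ∈ R.Φ) :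
    R.ht (α + β) = R.ht α + R.ht β := by
  rw [ht, sum_congr rfl fun δ hδ => R.coeff_add hα hβ hαβ hδ, sum_add_distrib, ht, ht]

lemma ht_of_mem_Δ {δ : V} (hδ : δ ∈ R.Δ) : R.ht δ = 1 := by
  rw [ht, sum_eq_single_of_mem δ hδ fun d hd hne => R.coeff_ne δ hδ d hd hne.symm,
    R.coeff_self δ hδ]

lemma ne_zero_of_mem {α : V} (hα : α ∈ R.Φ) : α ≠ 0 :=
  fun h => R.zero_not_mem (h ▸ hα)

lemma one_le_cartan_of_inner_pos {α β : V} (hα : α ∈ R.Φ) (hβ : β ∈ R.Φ)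
    (h : 0 < inner ℝ α β) : 1 ≤ R.cartan α β := by
  have hββ := real_inner_self_pos.mpr (R.ne_zero_of_mem hβ)
  have hpos : (0 : ℝ) < R.cartan α β := by
    by_contra! hle
    nlinarith [R.cartan_eq α hα β hβ]
  exact_mod_cast hpos

/-- Two distinct roots at an acute angle cannot both have Cartan integer `≥ 2`
(that would force `‖α - β‖² ≤ 0`), so one of the reflections `s_β α`, `s_α β` is `±(α - β)`. -/
lemma sub_mem_of_inner_pos {α β : V} (hα : α ∈ R.Φ) (hβ : β ∈ R.Φ) (hne : α ≠ β)
    (h : 0 < inner ℝ α β) : α - β ∈ R.Φ := by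
  have hβα : 0 < inner ℝ β α := by rwa [real_inner_comm]
  rcases (R.one_le_cartan_of_inner_pos hα hβ h).eq_or_lt with hab | hab
  · simpa [← hab] using R.reflect_mem α hα β hβ
  rcases (R.one_le_cartan_of_inner_pos hβ hα hβα).eq_or_lt with hba | hba
  · simpa [← hba] using R.neg_mem _ (R.reflect_mem β hβ α hα)
  have hab' : (2 : ℝ) ≤ R.cartan α β := by exact_mod_cast hab
  have hba' : (2 : ℝ) ≤ R.cartan β α := by exact_mod_cast hba
  have hββ := real_inner_self_pos.mpr (R.ne_zero_of_mem hβ)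
  have hαα := real_inner_self_pos.mpr (R.ne_zero_of_mem hα)
  have h₁ : inner ℝ β β ≤ inner ℝ α β := by nlinarith [R.cartan_eq α hα β hβ]
  have h₂ : inner ℝ α α ≤ inner ℝ β α := by nlinarith [R.cartan_eq β hβ α hα]
  have hsub : inner ℝ (α - β) (α - β) ≤ (0 : ℝ) := by
    rw [inner_sub_sub_self]
    linarith [real_inner_comm α β]
  exact absurd (sub_eq_zero.mp (real_inner_self_nonpos.mp hsub)) hne

lemma add_mem_of_inner_neg {α β : V} (hα : α ∈ R.Φ) (hβ : β ∈ R.Φ) (hne : α ≠ -β)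
    (h : inner ℝ α β < 0) : α + β ∈ R.Φ := by
  simpa using R.sub_mem_of_inner_pos hα (R.neg_mem β hβ) hne (by rwa [inner_neg_right, neg_pos])

lemma coeff_neg {α : V} (hα : α ∈ R.Φ) {δ : V} (hδ : δ ∈ R.Δ) :
    R.coeff (-α) δ = -R.coeff α δ := by
  refine R.coeff_eq_of_eq_sum (R.neg_mem α hα) (fun d => -R.coeff α d) ?_ hδ
  conv_lhs => rw [R.root_eq_sum α hα]
  simp only [Int.cast_neg, neg_smul, sum_neg_distrib]

section
variable {R}

lemma IsPos.of_le {α β : V} (hα : R.IsPos α) (hβ : β ∈ R.Φ) (hle : R.le α β) : R.IsPos β :=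
  ⟨hβ, fun δ hδ => (hα.2 δ hδ).trans (hle δ hδ)⟩

lemma IsPos.ht_nonneg {α : V} (hα : R.IsPos α) : 0 ≤ R.ht α :=
  sum_nonneg hα.2

lemma IsPos.ne_neg_of_mem_Δ {α δ : V} (hα : R.IsPos α) (hδ : δ ∈ R.Δ) : α ≠ -δ := by
  rintro rfl
  have := hα.2 δ hδ
  rw [R.coeff_neg (R.Δ_subset hδ) hδ, R.coeff_self δ hδ] at this
  omega

end

lemma lt_add_of_isPos {α δ : V} (hα : α ∈ R.Φ) (hδ : R.IsPos δ) (hαδ : α + δ ∈ R.Φ) :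
    R.lt α (α + δ) := by
  refine ⟨fun d hd => ?_, fun h => R.ne_zero_of_mem hδ.1 ?_⟩
  · rw [R.coeff_add hα hδ.1 hαδ hd]
    linarith [hδ.2 d hd]
  · simpa using h.symm

lemma sub_lt_of_isPos {γ δ : V} (hγ : γ ∈ R.Φ) (hδ : R.IsPos δ) (hγδ : γ - δ ∈ R.Φ) :
    R.lt (γ - δ) γ := by
  simpa using R.lt_add_of_isPos hγδ hδ (by simpa using hγ)

lemma isPos_of_mem_Δ {δ : V} (hδ : δ ∈ R.Δ) : R.IsPos δ :=
  ⟨R.Δ_subset hδ, fun d hd => by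
    rcases eq_or_ne δ d with rfl | hne
    · simp [R.coeff_self δ hδ]
    · simp [R.coeff_ne δ hδ d hd hne]⟩

lemma le_sub_of_mem_Δ {α γ δ : V} (hγ : γ ∈ R.Φ) (hδ : δ ∈ R.Δ) (hγδ : γ - δ ∈ R.Φ)
    (hle : R.le α γ) (hlt : R.coeff α δ < R.coeff γ δ) : R.le α (γ - δ) := by
  intro d hd
  rw [R.coeff_sub hγ (R.Δ_subset hδ) hγδ hd]
  rcases eq_or_ne d δ with rfl | hne
  · rw [R.coeff_self d hd]; omega
  · rw [R.coeff_ne δ hδ d hd hne.symm]; linarith [hle d hd]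

lemma add_le_of_mem_Δ {α γ δ : V} (hα : α ∈ R.Φ) (hδ : δ ∈ R.Δ) (hαδ : α + δ ∈ R.Φ)
    (hle : R.le α γ) (hlt : R.coeff α δ < R.coeff γ δ) : R.le (α + δ) γ := by
  intro d hd
  rw [R.coeff_add hα (R.Δ_subset hδ) hαδ hd]
  rcases eq_or_ne d δ with rfl | hne
  · rw [R.coeff_self d hd]; omega
  · rw [R.coeff_ne δ hδ d hd hne.symm]; linarith [hle d hd]

lemma exists_mem_Δ_inner_pos_or_neg {α γ : V} (hα : α ∈ R.Φ) (hγ : γ ∈ R.Φ)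
    (hle : R.le α γ) (hne : α ≠ γ) :
    ∃ δ ∈ R.Δ, R.coeff α δ < R.coeff γ δ ∧ (0 < inner ℝ δ γ ∨ inner ℝ δ α < 0) := by
  set c : V → ℝ := fun δ => ((R.coeff γ δ - R.coeff α δ : ℤ) : ℝ) with hc
  have hdiff : γ - α = ∑ δ ∈ R.Δ, c δ • δ := by
    conv_lhs => rw [R.root_eq_sum γ hγ, R.root_eq_sum α hα]
    simp only [hc, Int.cast_sub, sub_smul, sum_sub_distrib]
  have hsum : 0 < ∑ δ ∈ R.Δ, c δ * (inner ℝ δ γ - inner ℝ δ α) :=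
    calc (0 : ℝ) < inner ℝ (γ - α) (γ - α) := real_inner_self_pos.mpr (sub_ne_zero.mpr hne.symm)
      _ = ∑ δ ∈ R.Δ, c δ * inner ℝ δ (γ - α) := by
        nth_rw 1 [hdiff]
        simp only [sum_inner, real_inner_smul_left]
      _ = _ := by simp only [inner_sub_right]
  obtain ⟨δ, hδ, hpos⟩ := exists_lt_of_sum_lt (sum_const_zero.trans_lt hsum)
  have hcδ : 0 ≤ c δ := by simpa [hc] using hle δ hδ
  obtain ⟨hcpos, hinner⟩ := (pos_and_pos_or_neg_and_neg_of_mul_pos hpos).resolve_right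
    fun h => h.1.not_ge hcδ
  refine ⟨δ, hδ, by simpa [hc] using hcpos, ?_⟩
  by_contra! h
  linarith

end RootSystemData

open RootSystemData in
/-- If `α ⪯ γ` are positive roots of an irreducible reduced root system with
`ht γ - ht α ≥ 2`, then there is a positive root `β` with `α ≺ β ≺ γ`. -/
theorem exists_intermediate_root
    {V : Type*} [NormedAddCommGroup V] [InnerProductSpace ℝ V]
    (R : RootSystemData V) (α γ : V) (hα : R.IsPos α) (hγ : R.IsPos γ)
    (hle : R.le α γ) (hht : 2 ≤ R.ht γ - R.ht α) :
    ∃ β : V, R.IsPos β ∧ R.lt α β ∧ R.lt β γ := by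
  obtain ⟨δ, hδ, hlt, hγδ | hαδ⟩ :=
    R.exists_mem_Δ_inner_pos_or_neg hα.1 hγ.1 hle (by rintro rfl; omega)
  · have hne : γ ≠ δ := by
      rintro rfl
      linarith [R.ht_of_mem_Δ hδ, hα.ht_nonneg]
    have hβ : γ - δ ∈ R.Φ :=
      R.sub_mem_of_inner_pos hγ.1 (R.Δ_subset hδ) hne (by rwa [real_inner_comm])
    have hαβ : R.le α (γ - δ) := R.le_sub_of_mem_Δ hγ.1 hδ hβ hle hlt
    refine ⟨γ - δ, hα.of_le hβ hαβ, ⟨hαβ, fun h => ?_⟩,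
      R.sub_lt_of_isPos hγ.1 (R.isPos_of_mem_Δ hδ) hβ⟩
    have := R.ht_sub hγ.1 (R.Δ_subset hδ) hβ
    rw [← h, R.ht_of_mem_Δ hδ] at this
    omega
  · have hβ : α + δ ∈ R.Φ := R.add_mem_of_inner_neg hα.1 (R.Δ_subset hδ)
      (hα.ne_neg_of_mem_Δ hδ) (by rwa [real_inner_comm])
    have hαβ : R.lt α (α + δ) := R.lt_add_of_isPos hα.1 (R.isPos_of_mem_Δ hδ) hβ
    refine ⟨α + δ, hα.of_le hβ hαβ.1, hαβ, R.add_le_of_mem_Δ hα.1 hδ hβ hle hlt, fun h => ?_⟩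
    have := R.ht_add hα.1 (R.Δ_subset hδ) hβ
    rw [h, R.ht_of_mem_Δ hδ] at this
    omega
end

section
/- Let R be a commutative ring and r ∈ R, and set E_r = [[1, r],[0,1]], F_0 = [[1,0],[−p,1]] (p an element of R), H_r = [[1+pr, 0],[0, (1+pr)^{-1}]] where 1 + pr is invertible. Then F_0 E_r F_0^{-1} E_r^{-1} = H_r · [[1,0],[−pr(1+pr),1]]^p · [[1, −r^2(1+pr)^{-1}],[0,1]]^p, where M^p denotes the p-th matrix power (equivalently the unipotent matrix with entry multiplied by p). -/
lemma lower_pow (R : Type*) [CommRing R] (c : R) (p : ℕ) :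
    (!![1, 0; c, 1] : Matrix (Fin 2) (Fin 2) R) ^ p = !![1, 0; p * c, 1] := by
  induction p with
  | zero => simp [Matrix.one_fin_two]
  | succ n ih =>
      rw [pow_succ, ih]
      push_cast
      ext i j
      fin_cases i <;> fin_cases j <;> simp [Matrix.mul_apply, Fin.sum_univ_two] <;> ring

lemma upper_pow (R : Type*) [CommRing R] (b : R) (p : ℕ) :
    (!![1, b; 0, 1] : Matrix (Fin 2) (Fin 2) R) ^ p = !![1, p * b; 0, 1] := by
  induction p with
  | zero => simp [Matrix.one_fin_two]
  | succ n ih =>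
      rw [pow_succ, ih]
      push_cast
      ext i j
      fin_cases i <;> fin_cases j <;> simp [Matrix.mul_apply, Fin.sum_univ_two] <;> ring

/-- For `E_r = [[1,r],[0,1]]`, `F₀ = [[1,0],[−p,1]]` and
`H_r = diag(1+pr, (1+pr)⁻¹)` (with `1 + pr` a unit `u`), one has
`F₀ E_r F₀⁻¹ E_r⁻¹ = H_r · [[1,0],[−pr(1+pr),1]]^p · [[1, −r²(1+pr)⁻¹],[0,1]]^p`,
where `^p` is the `p`-th matrix power. -/
theorem F0_Er_commutator_factorization
    (R : Type*) [CommRing R] (p : ℕ) (r : R) (u : Rˣ) (hu : (u : R) = 1 + (p : R) * r) :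
    (!![1, 0; -(p : R), 1] * !![1, r; 0, 1] * !![1, 0; (p : R), 1] * !![1, -r; 0, 1]
        : Matrix (Fin 2) (Fin 2) R)
      = !![(u : R), 0; 0, (↑u⁻¹ : R)]
          * (!![1, 0; -(p : R) * r * (u : R), 1]) ^ p
          * (!![1, -(r ^ 2) * (↑u⁻¹ : R); 0, 1]) ^ p := by
  rw [lower_pow, upper_pow]
  have h1 : (u : R) * (↑u⁻¹ : R) = 1 := u.mul_inv
  have h2 : (↑u⁻¹ : R) * (u : R) = 1 := u.inv_mul
  rw [hu] at h1 h2
  ext i j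
  fin_cases i <;> fin_cases j <;>
    simp [Matrix.mul_apply, Fin.sum_univ_two, hu] <;> ring_nf <;>
    first
    | rfl
    | linear_combination (-(r ^ 2 * (p : R))) * h1
    | linear_combination (r ^ 2 * (p : R)) * h1
    | linear_combination (-((p : R) ^ 2 * r)) * h1
    | linear_combination ((p : R) ^ 2 * r) * h1
    | linear_combination (-(1 - (p:R)*r + (p:R)^2*r^2) - (p:R)^3*r^3*(↑u⁻¹ : R)) * h1
    | linear_combination ((1 - (p:R)*r + (p:R)^2*r^2) + (p:R)^3*r^3*(↑u⁻¹ : R)) * h1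
end
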